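/- arXiv:2011.14878 — 5 statements merged into one kernel-verified Lean document; each statement's English description precedes it below -/
import Mathlib

section
/- The unweighted least squares additive approximation of a cooperative game recovers the Banzhaf values: the coefficients a_0 = 2^{-d} Σ_{S⊆D} u(S) − (1/2) Σ_j ψ_j(u) and a_i = ψ_i(u) (the Banzhaf values) are the unique minimizers of L(b_0,…,b_d) = Σ_{S⊆D} (b_0 + Σ_{i∈S} b_i − u(S))². -/
open Finset

/-- The Banzhaf value of player `i`. -/
noncomputable def banzhaf (d : ℕ) (u : Finset (Fin d) → ℝ) (i : Fin d) : ℝ :=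
  (1 / (2 : ℝ) ^ (d - 1)) * ∑ S ∈ (univ \ {i}).powerset, (u (insert i S) - u S)

/-- The unweighted least squares objective for an additive model `b₀ + Σ_{i ∈ S} bᵢ`. -/
noncomputable def lsObjective (d : ℕ) (u : Finset (Fin d) → ℝ)
    (b0 : ℝ) (b : Fin d → ℝ) : ℝ :=
  ∑ S ∈ (univ : Finset (Fin d)).powerset, (b0 + ∑ i ∈ S, b i - u S) ^ 2

/-!
Write `m_b(S) = b₀ + Σ_{i ∈ S} bᵢ`. The residual `r = m_a - u` of the proposed coefficients
satisfies the normal equations: it sums to zero over all coalitions, and over the coalitions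
containing any fixed player `i`. The first is a count; for the second, pairing `T` with `T ∪ {i}`
turns the difference between the sums over coalitions with and without `i` into
`2^{d-1} (aᵢ - ψᵢ(u)) = 0`. Hence `r` is orthogonal to every additive model, and Pythagoras gives
`L(b) = L(a) + Σ_S (m_b(S) - m_a(S))²`. Equality forces `m_b = m_a` on every coalition, and
evaluating at `∅` and `{i}` recovers the coefficients.
-/

theorem sum_add_sq_of_sum_mul_eq_zero {α R : Type*} [CommSemiring R] (s : Finset α)
    (f g : α → R) (h : ∑ x ∈ s, f x * g x = 0) :
    ∑ x ∈ s, (f x + g x) ^ 2 = ∑ x ∈ s, f x ^ 2 + ∑ x ∈ s, g x ^ 2 := by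
  simp only [add_sq, sum_add_distrib, mul_assoc, ← mul_sum, h, mul_zero, add_zero]

section Powerset

variable {ι : Type*} [Fintype ι] [DecidableEq ι]

theorem notMem_of_mem_powerset_sdiff_singleton {i : ι} {T : Finset ι}
    (hT : T ∈ (univ \ {i}).powerset) : i ∉ T :=
  fun hi => notMem_sdiff_of_mem_right (mem_singleton_self i) (mem_powerset.mp hT hi)

theorem card_powerset_sdiff_singleton (i : ι) :
    ((univ \ {i} : Finset ι).powerset.card : ℝ) = 2 ^ Fintype.card ι / 2 := by
  have hcard : Fintype.card ι = #(univ \ {i}) + 1 := by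
    rw [card_univ_sdiff, card_singleton, Nat.sub_add_cancel (Fintype.card_pos_iff.mpr ⟨i⟩)]
  rw [card_powerset, hcard]
  push_cast
  ring

theorem sum_powerset_univ_eq_sum_powerset_sdiff_singleton {M : Type*} [AddCommMonoid M]
    (i : ι) (f : Finset ι → M) :
    ∑ S ∈ (univ : Finset ι).powerset, f S
      = ∑ T ∈ (univ \ {i}).powerset, (f T + f (insert i T)) := by
  rw [sum_add_distrib, ← sum_powerset_insert (notMem_sdiff_of_mem_right (mem_singleton_self i)),
    sdiff_singleton_eq_erase, insert_erase (mem_univ i)]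

theorem sum_powerset_sum_mem {M : Type*} [AddCommMonoid M] (F : ι → Finset ι → M) :
    ∑ S ∈ (univ : Finset ι).powerset, ∑ i ∈ S, F i S
      = ∑ i, ∑ T ∈ (univ \ {i}).powerset, F i (insert i T) := by
  calc ∑ S ∈ (univ : Finset ι).powerset, ∑ i ∈ S, F i S
      = ∑ i, ∑ S ∈ (univ : Finset ι).powerset, if i ∈ S then F i S else 0 := by
        rw [sum_comm]
        simp only [sum_ite_mem, univ_inter]
    _ = ∑ i, ∑ T ∈ (univ \ {i}).powerset, F i (insert i T) := by
        refine sum_congr rfl fun i _ => ?_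
        rw [sum_powerset_univ_eq_sum_powerset_sdiff_singleton i]
        refine sum_congr rfl fun T hT => ?_
        simp [notMem_of_mem_powerset_sdiff_singleton hT]

end Powerset

section AdditiveModel

variable {ι : Type*}

def additiveModel (b0 : ℝ) (b : ι → ℝ) (S : Finset ι) : ℝ :=
  b0 + ∑ i ∈ S, b i

theorem eq_and_eq_of_additiveModel_eq {a0 b0 : ℝ} {a b : ι → ℝ}
    (h : ∀ S, additiveModel b0 b S = additiveModel a0 a S) : b0 = a0 ∧ b = a := by
  have h0 : b0 = a0 := by simpa [additiveModel] using h ∅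
  refine ⟨h0, funext fun i => ?_⟩
  simpa [additiveModel, h0] using h {i}

theorem sum_additiveModel_mul_eq_zero [Fintype ι] [DecidableEq ι] (c0 : ℝ) (c : ι → ℝ)
    {r : Finset ι → ℝ}
    (h0 : ∑ S ∈ (univ : Finset ι).powerset, r S = 0)
    (hi : ∀ i, ∑ T ∈ (univ \ {i}).powerset, r (insert i T) = 0) :
    ∑ S ∈ (univ : Finset ι).powerset, additiveModel c0 c S * r S = 0 := by
  simp only [additiveModel, add_mul, sum_add_distrib, ← mul_sum, h0, sum_mul,
    sum_powerset_sum_mem fun i S => c i * r S, hi, mul_zero, sum_const_zero, add_zero]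

end AdditiveModel

theorem lsObjective_eq_sum_sq_add {d : ℕ} {u : Finset (Fin d) → ℝ} {a0 : ℝ} {a : Fin d → ℝ}
    (h0 : ∑ S ∈ (univ : Finset (Fin d)).powerset, (additiveModel a0 a S - u S) = 0)
    (hi : ∀ i, ∑ T ∈ (univ \ {i}).powerset, (additiveModel a0 a (insert i T) - u (insert i T)) = 0)
    (b0 : ℝ) (b : Fin d → ℝ) :
    lsObjective d u b0 b
      = ∑ S ∈ (univ : Finset (Fin d)).powerset, (additiveModel b0 b S - additiveModel a0 a S) ^ 2
        + lsObjective d u a0 a := by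
  have horth : ∑ S ∈ (univ : Finset (Fin d)).powerset,
      (additiveModel b0 b S - additiveModel a0 a S) * (additiveModel a0 a S - u S) = 0 := by
    simp only [sub_mul, sum_sub_distrib, sum_additiveModel_mul_eq_zero _ _ h0 hi, sub_zero]
  calc lsObjective d u b0 b
      = ∑ S ∈ (univ : Finset (Fin d)).powerset,
          ((additiveModel b0 b S - additiveModel a0 a S) + (additiveModel a0 a S - u S)) ^ 2 :=
        sum_congr rfl fun S _ => by simp only [additiveModel]; ring
    _ = _ := sum_add_sq_of_sum_mul_eq_zero _ _ _ horth

theorem sum_powerset_insert_sub_eq_banzhaf {d : ℕ} (u : Finset (Fin d) → ℝ) (i : Fin d) :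
    ∑ T ∈ (univ \ {i}).powerset, (u (insert i T) - u T) = 2 ^ d / 2 * banzhaf d u i := by
  have hpow : (2 : ℝ) ^ (d - 1) = 2 ^ d / 2 := by
    rw [eq_div_iff two_ne_zero, ← pow_succ, Nat.sub_add_cancel i.pos]
  rw [banzhaf, hpow]
  field_simp

section Banzhaf

variable {d : ℕ} (u : Finset (Fin d) → ℝ)

noncomputable def banzhafIntercept : ℝ :=
  (1 / (2 : ℝ) ^ d) * (∑ S ∈ (univ : Finset (Fin d)).powerset, u S)
    - (1 / 2) * ∑ j : Fin d, banzhaf d u j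

theorem sum_residual_banzhaf_eq_zero :
    ∑ S ∈ (univ : Finset (Fin d)).powerset,
      (additiveModel (banzhafIntercept u) (banzhaf d u) S - u S) = 0 := by
  simp only [additiveModel, banzhafIntercept, sum_sub_distrib, sum_add_distrib,
    sum_powerset_sum_mem fun i _ => banzhaf d u i, sum_const, nsmul_eq_mul,
    card_powerset_sdiff_singleton]
  rw [← mul_sum, card_powerset, card_univ, Fintype.card_fin]
  push_cast
  field_simp
  ring

theorem sum_residual_banzhaf_insert_eq_zero (i : Fin d) :
    ∑ T ∈ (univ \ {i}).powerset,
      (additiveModel (banzhafIntercept u) (banzhaf d u) (insert i T) - u (insert i T)) = 0 := by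
  set r := fun S => additiveModel (banzhafIntercept u) (banzhaf d u) S - u S with hr
  have hsum : ∑ T ∈ (univ \ {i}).powerset, (r T + r (insert i T)) = 0 := by
    rw [← sum_powerset_univ_eq_sum_powerset_sdiff_singleton, sum_residual_banzhaf_eq_zero]
  have hdiff : ∑ T ∈ (univ \ {i}).powerset, (r (insert i T) - r T) = 0 := by
    have hterm : ∀ T ∈ (univ \ {i}).powerset,
        r (insert i T) - r T = banzhaf d u i - (u (insert i T) - u T) := by
      intro T hT
      simp only [hr, additiveModel, sum_insert (notMem_of_mem_powerset_sdiff_singleton hT)]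
      ring
    rw [sum_congr rfl hterm, sum_sub_distrib, sum_powerset_insert_sub_eq_banzhaf, sum_const,
      nsmul_eq_mul, card_powerset_sdiff_singleton, Fintype.card_fin, sub_self]
  rw [sum_add_distrib] at hsum
  rw [sum_sub_distrib] at hdiff
  linarith

end Banzhaf

/-- The unweighted least squares additive approximation of a cooperative game recovers the
Banzhaf values: `a₀ = 2^{-d} Σ_S u(S) - (1/2) Σ_j ψ_j(u)` and `aᵢ = ψ_i(u)` are the unique
minimizers. -/
theorem banzhaf_least_squares (d : ℕ) (u : Finset (Fin d) → ℝ)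
    (a0 : ℝ) (a : Fin d → ℝ)
    (ha0 : a0 = (1 / (2 : ℝ) ^ d) * (∑ S ∈ (univ : Finset (Fin d)).powerset, u S)
      - (1 / 2) * ∑ j : Fin d, banzhaf d u j)
    (ha : ∀ i : Fin d, a i = banzhaf d u i) :
    ∀ b0 : ℝ, ∀ b : Fin d → ℝ,
      lsObjective d u a0 a ≤ lsObjective d u b0 b ∧
      (lsObjective d u b0 b = lsObjective d u a0 a → b0 = a0 ∧ ∀ i, b i = a i) := by
  intro b0 b
  obtain rfl : a0 = banzhafIntercept u := ha0
  obtain rfl : a = banzhaf d u := funext ha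
  have hL := lsObjective_eq_sum_sq_add (sum_residual_banzhaf_eq_zero u)
    (sum_residual_banzhaf_insert_eq_zero u) b0 b
  refine ⟨hL ▸ le_add_of_nonneg_left (sum_nonneg fun S _ => sq_nonneg _), fun heq => ?_⟩
  rw [hL, add_eq_right, sum_eq_zero_iff_of_nonneg fun S _ => sq_nonneg _] at heq
  obtain ⟨rfl, rfl⟩ := eq_and_eq_of_additiveModel_eq fun S =>
    sub_eq_zero.mp (pow_eq_zero_iff two_ne_zero |>.mp (heq S (mem_powerset.mpr (subset_univ S))))
  exact ⟨rfl, fun _ => rfl⟩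
end

section
/- With the weighting kernel π_Rem(S) = 1 if |S| ≥ d−1 and 0 otherwise, the unique minimizers of the weighted least squares objective Σ_{S⊆D} π_Rem(S)(b_0 + Σ_{i∈S} b_i − u(S))² are a_i = u(D) − u(D\{i}) for each i and a_0 = u(D) − Σ_{i∈D} a_i. -/
/-! The objective is a sum of squares that vanishes exactly when the additive model interpolates
`u` on `D` and on every `D \ {i}`; these `d + 1` equations have the unique solution
`bᵢ = u(D) - u(D \ {i})`, `b₀ = u(D) - Σ bᵢ`, which is therefore the unique minimizer. -/

open Finset

/-- Weighted least squares objective with the "remove individual" kernel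
`π_Rem(S) = 1` if `|S| ≥ d - 1` and `0` otherwise. -/
noncomputable def wlsRemObjective (d : ℕ) (u : Finset (Fin d) → ℝ)
    (b0 : ℝ) (b : Fin d → ℝ) : ℝ :=
  ∑ S ∈ (univ : Finset (Fin d)).powerset,
    (if d - 1 ≤ S.card then (1 : ℝ) else 0) * (b0 + ∑ i ∈ S, b i - u S) ^ 2

namespace Finset

variable {α : Type*} [Fintype α] [DecidableEq α]

theorem eq_univ_or_eq_univ_sdiff_singleton {S : Finset α} (hS : Fintype.card α - 1 ≤ #S) :
    S = univ ∨ ∃ i, S = univ \ {i} := by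
  have hcompl : #Sᶜ ≤ 1 := by rw [card_compl]; omega
  rcases Nat.le_one_iff_eq_zero_or_eq_one.mp hcompl with h | h
  · exact .inl (compl_eq_empty_iff S |>.mp (card_eq_zero.mp h))
  · obtain ⟨i, hi⟩ := card_eq_one.mp h
    exact .inr ⟨i, by rw [← compl_eq_univ_sdiff, ← hi, compl_compl]⟩

theorem additive_eq_on_card_sub_one_le_iff (u : Finset α → ℝ) (b0 : ℝ) (b : α → ℝ) :
    (∀ S : Finset α, Fintype.card α - 1 ≤ #S → b0 + ∑ i ∈ S, b i = u S) ↔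
      (∀ i, b i = u univ - u (univ \ {i})) ∧ b0 = u univ - ∑ i, b i := by
  have sum_sdiff (i : α) : ∑ j ∈ univ \ {i}, b j = ∑ j, b j - b i := by
    rw [sum_sdiff_eq_sub (subset_univ _), sum_singleton]
  constructor
  · intro h
    have huniv := h univ (by simp)
    refine ⟨fun i ↦ ?_, by linarith⟩
    have hi := h (univ \ {i}) (by simp [card_sdiff_of_subset])
    rw [sum_sdiff] at hi
    linarith
  · rintro ⟨hb, hb0⟩ S hS
    rcases eq_univ_or_eq_univ_sdiff_singleton hS with rfl | ⟨i, rfl⟩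
    · linarith
    · rw [sum_sdiff, hb i]
      linarith

end Finset

theorem wlsRemObjective_nonneg (d : ℕ) (u : Finset (Fin d) → ℝ) (b0 : ℝ) (b : Fin d → ℝ) :
    0 ≤ wlsRemObjective d u b0 b :=
  sum_nonneg fun S _ ↦ by positivity

theorem wlsRemObjective_eq_zero_iff (d : ℕ) (u : Finset (Fin d) → ℝ) (b0 : ℝ) (b : Fin d → ℝ) :
    wlsRemObjective d u b0 b = 0 ↔
      ∀ S : Finset (Fin d), d - 1 ≤ #S → b0 + ∑ i ∈ S, b i = u S := by
  rw [wlsRemObjective, sum_eq_zero_iff_of_nonneg fun S _ ↦ by positivity]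
  refine forall_congr' fun S ↦ ?_
  simp only [mem_powerset, subset_univ, true_implies, mul_eq_zero, ite_eq_right_iff,
    one_ne_zero, imp_false, not_le, pow_eq_zero_iff two_ne_zero, sub_eq_zero]
  constructor
  · exact fun h hS ↦ h.resolve_left (not_lt.mpr hS)
  · intro h
    by_cases hS : d - 1 ≤ #S
    exacts [.inr (h hS), .inl (not_le.mp hS)]

theorem wls_remove_individual_general (d : ℕ) (u : Finset (Fin d) → ℝ)
    (a0 : ℝ) (a : Fin d → ℝ)
    (ha : ∀ i : Fin d, a i = u univ - u (univ \ {i}))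
    (ha0 : a0 = u univ - ∑ i : Fin d, a i) :
    ∀ b0 : ℝ, ∀ b : Fin d → ℝ,
      wlsRemObjective d u a0 a ≤ wlsRemObjective d u b0 b ∧
      (wlsRemObjective d u b0 b = wlsRemObjective d u a0 a → b0 = a0 ∧ ∀ i, b i = a i) := by
  have fit_iff (b0 : ℝ) (b : Fin d → ℝ) :
      wlsRemObjective d u b0 b = 0 ↔
        (∀ i, b i = u univ - u (univ \ {i})) ∧ b0 = u univ - ∑ i, b i := by
    rw [wlsRemObjective_eq_zero_iff, ← additive_eq_on_card_sub_one_le_iff, Fintype.card_fin]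
  have hzero : wlsRemObjective d u a0 a = 0 := (fit_iff a0 a).mpr ⟨ha, ha0⟩
  intro b0 b
  refine ⟨hzero ▸ wlsRemObjective_nonneg d u b0 b, fun h ↦ ?_⟩
  obtain ⟨hb, hb0⟩ := (fit_iff b0 b).mp (h.trans hzero)
  obtain rfl : b = a := funext fun i ↦ (hb i).trans (ha i).symm
  exact ⟨hb0.trans ha0.symm, fun _ ↦ rfl⟩

/-- With the kernel `π_Rem`, the unique minimizers of the weighted least squares objective
are `aᵢ = u(D) - u(D \ {i})` and `a₀ = u(D) - Σ_{i ∈ D} aᵢ`. -/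
theorem wls_remove_individual (d : ℕ) (hd : 1 ≤ d) (u : Finset (Fin d) → ℝ)
    (a0 : ℝ) (a : Fin d → ℝ)
    (ha : ∀ i : Fin d, a i = u univ - u (univ \ {i}))
    (ha0 : a0 = u univ - ∑ i : Fin d, a i) :
    ∀ b0 : ℝ, ∀ b : Fin d → ℝ,
      wlsRemObjective d u a0 a ≤ wlsRemObjective d u b0 b ∧
      (wlsRemObjective d u b0 b = wlsRemObjective d u a0 a → b0 = a0 ∧ ∀ i, b i = a i) :=
  wls_remove_individual_general d u a0 a ha ha0
end

section
/- For a classification model on a finite feature space and a discrete label, the unique subset extension F consistent with a strictly positive distribution q(X) (i.e., satisfying countable additivity and Bayes rule as conditional probability estimates) is given by F(x_S) = E_{q(X_{S̄} | X_S = x_S)}[f(x_S, X_{S̄})], the conditional expectation of the full-input model output under the conditional distribution induced by q. -/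
open Finset
open scoped Classical

variable {d : ℕ} {α : Fin d → Type*} [∀ i, Fintype (α i)]

/-- Marginalizing the removed features out of `f` using the conditional distribution
induced by `q`: `E_{q(X_{S̄} | X_S = x_S)}[f(x_S, X_{S̄})]`. -/
noncomputable def condExpSubset (q f : (∀ i, α i) → ℝ) (x : ∀ i, α i)
    (S : Finset (Fin d)) : ℝ :=
  (∑ x' ∈ univ.filter (fun x' : ∀ i, α i => ∀ i ∈ S, x' i = x i), q x' * f x') /
    (∑ x' ∈ univ.filter (fun x' : ∀ i, α i => ∀ i ∈ S, x' i = x i), q x')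

/-- `F` is consistent with the distribution `q` if its conditional probability estimates
obey countable additivity and Bayes rule: for all `S ⊆ T`,
`F(x_S) q(x_S) = Σ_{x' : x'_S = x_S} F(x'_T) q(x')`. -/
def Consistent (q : (∀ i, α i) → ℝ) (F : (∀ i, α i) → Finset (Fin d) → ℝ) : Prop :=
  ∀ S T : Finset (Fin d), S ⊆ T → ∀ x : ∀ i, α i,
    F x S * (∑ x' ∈ univ.filter (fun x' : ∀ i, α i => ∀ i ∈ S, x' i = x i), q x') =
      ∑ x' ∈ univ.filter (fun x' : ∀ i, α i => ∀ i ∈ S, x' i = x i), F x' T * q x'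

private lemma filter_eq_of_agree (x x' : ∀ i, α i) (T : Finset (Fin d))
    (h : ∀ i ∈ T, x' i = x i) :
    univ.filter (fun a : ∀ i, α i => ∀ i ∈ T, a i = x' i) =
      univ.filter (fun a : ∀ i, α i => ∀ i ∈ T, a i = x i) := by
  apply Finset.filter_congr
  intro a _
  constructor <;> intro ha i hi
  · rw [ha i hi, h i hi]
  · rw [ha i hi, ← h i hi]

private lemma denom_pos (q : (∀ i, α i) → ℝ) (hq_pos : ∀ x, 0 < q x)
    (x : ∀ i, α i) (S : Finset (Fin d)) :
    0 < ∑ x' ∈ univ.filter (fun x' : ∀ i, α i => ∀ i ∈ S, x' i = x i), q x' :=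
  Finset.sum_pos (fun i _ => hq_pos i) ⟨x, by simp⟩

private lemma tower (q : (∀ i, α i) → ℝ) (hq_pos : ∀ x, 0 < q x)
    (f : (∀ i, α i) → ℝ) (S T : Finset (Fin d)) (hST : S ⊆ T) (x : ∀ i, α i) :
    ∑ x' ∈ univ.filter (fun x' : ∀ i, α i => ∀ i ∈ S, x' i = x i),
        condExpSubset q f x' T * q x' =
      ∑ x' ∈ univ.filter (fun x' : ∀ i, α i => ∀ i ∈ S, x' i = x i), q x' * f x' := by
  set g : (∀ i, α i) → (∀ i, α i) := fun a i => if i ∈ T then a i else x i with hg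
  set s := univ.filter (fun x' : ∀ i, α i => ∀ i ∈ S, x' i = x i) with hs
  set t := s.image g with ht
  have hmaps : ∀ a ∈ s, g a ∈ t := fun a ha => Finset.mem_image_of_mem g ha
  rw [← Finset.sum_fiberwise_of_maps_to hmaps (fun a => condExpSubset q f a T * q a),
    ← Finset.sum_fiberwise_of_maps_to hmaps (fun a => q a * f a)]
  apply Finset.sum_congr rfl
  intro b hb
  obtain ⟨x₀, hx₀s, rfl⟩ := Finset.mem_image.mp hb
  have hfib : s.filter (fun a => g a = g x₀) =
      univ.filter (fun a : ∀ i, α i => ∀ i ∈ T, a i = x₀ i) := by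
    ext a
    simp only [hs, Finset.mem_filter, Finset.mem_univ, true_and]
    constructor
    · rintro ⟨-, hga⟩ i hi
      have := congrFun hga i
      simpa [hg, hi] using this
    · intro h
      refine ⟨fun i hi => ?_, ?_⟩
      · rw [h i (hST hi)]
        exact (Finset.mem_filter.mp hx₀s).2 i hi
      · funext i
        by_cases hi : i ∈ T <;> simp [hg, hi, h]
  rw [hfib]
  have hDpos := denom_pos q hq_pos x₀ T
  have hconst : ∀ a ∈ univ.filter (fun a : ∀ i, α i => ∀ i ∈ T, a i = x₀ i),
      condExpSubset q f a T = condExpSubset q f x₀ T := by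
    intro a ha
    have h : ∀ i ∈ T, a i = x₀ i := (Finset.mem_filter.mp ha).2
    unfold condExpSubset
    rw [filter_eq_of_agree x₀ a T h]
  calc ∑ a ∈ univ.filter (fun a : ∀ i, α i => ∀ i ∈ T, a i = x₀ i),
        condExpSubset q f a T * q a
      = ∑ a ∈ univ.filter (fun a : ∀ i, α i => ∀ i ∈ T, a i = x₀ i),
          condExpSubset q f x₀ T * q a :=
        Finset.sum_congr rfl (fun a ha => by rw [hconst a ha])
    _ = condExpSubset q f x₀ T *
          ∑ a ∈ univ.filter (fun a : ∀ i, α i => ∀ i ∈ T, a i = x₀ i), q a :=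
        (Finset.mul_sum _ _ _).symm
    _ = ∑ a ∈ univ.filter (fun a : ∀ i, α i => ∀ i ∈ T, a i = x₀ i), q a * f a := by
        unfold condExpSubset
        exact div_mul_cancel₀ _ hDpos.ne'

/-- For a classification model `f` on a finite feature space, the unique subset extension
`F` consistent with a strictly positive distribution `q` is given by marginalizing out the
held-out features with their conditional distribution. -/
theorem unique_consistent_subset_extension
    (q : (∀ i, α i) → ℝ) (hq_pos : ∀ x, 0 < q x) (hq_sum : ∑ x : ∀ i, α i, q x = 1)
    (f : (∀ i, α i) → ℝ) (hf : ∀ x, f x ∈ Set.Icc (0 : ℝ) 1)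
    (F : (∀ i, α i) → Finset (Fin d) → ℝ)
    (hF_inv : ∀ (x x' : ∀ i, α i) (S : Finset (Fin d)),
      (∀ i ∈ S, x i = x' i) → F x S = F x' S)
    (hF_ext : ∀ x, F x univ = f x) :
    Consistent q F ↔ ∀ (x : ∀ i, α i) (S : Finset (Fin d)), F x S = condExpSubset q f x S := by
  constructor
  · intro hcons x S
    have h := hcons S univ (Finset.subset_univ S) x
    have h' : F x S * (∑ x' ∈ univ.filter
        (fun x' : ∀ i, α i => ∀ i ∈ S, x' i = x i), q x') =
        ∑ x' ∈ univ.filter (fun x' : ∀ i, α i => ∀ i ∈ S, x' i = x i), q x' * f x' := by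
      rw [h]
      exact Finset.sum_congr rfl (fun a _ => by rw [hF_ext, mul_comm])
    unfold condExpSubset
    rw [eq_div_iff (denom_pos q hq_pos x S).ne']
    exact h'
  · intro hform S T hST x
    rw [hform x S]
    unfold condExpSubset
    rw [div_mul_cancel₀ _ (denom_pos q hq_pos x S).ne']
    have hsum : (∑ x' ∈ univ.filter (fun x' : ∀ i, α i => ∀ i ∈ S, x' i = x i),
        F x' T * q x') =
        ∑ x' ∈ univ.filter (fun x' : ∀ i, α i => ∀ i ∈ S, x' i = x i),
          condExpSubset q f x' T * q x' :=
      Finset.sum_congr rfl (fun a _ => by rw [hform a T])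
    rw [hsum]
    exact (tower q hq_pos f S T hST x).symm
end

section
/- If a random mask M ∈ {0,1}^d is independent of (X, Y) and assigns positive probability to every mask, then the minimizer of E_{M,X,Y}[ℓ(g(X ⊙ M, M), Y)] over all functions g, for cross entropy loss with discrete Y, satisfies g*(x ⊙ m, m) = p(Y | X_S = x_S) for every mask m with S = {i : m_i = 1}, i.e., the trained-with-missingness model computes the Bayes-optimal prediction for each feature subset. -/
open Finset
open scoped Classical

variable {d : ℕ} {α : Fin d → Type*} [∀ i, Fintype (α i)] {β : Type*} [Fintype β]

/-- Bayes-optimal prediction `p(y | X_S = x_S)` induced by the joint distribution `p`. -/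
noncomputable def condProbY (p : (∀ i, α i) → β → ℝ) (x : ∀ i, α i)
    (S : Finset (Fin d)) (y : β) : ℝ :=
  (∑ x' ∈ univ.filter (fun x' : ∀ i, α i => ∀ i ∈ S, x' i = x i), p x' y) /
    (∑ x' ∈ univ.filter (fun x' : ∀ i, α i => ∀ i ∈ S, x' i = x i), ∑ y' : β, p x' y')

/-- Expected cross-entropy risk of a model `g` trained with random feature masking: the
mask `S` (equivalently `m ∈ {0,1}^d`) is sampled from `π`, independently of `(X, Y)`. -/
noncomputable def maskedRisk (p : (∀ i, α i) → β → ℝ) (π : Finset (Fin d) → ℝ)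
    (g : (∀ i, α i) → Finset (Fin d) → β → ℝ) : ℝ :=
  ∑ S : Finset (Fin d), π S *
    ∑ x : ∀ i, α i, ∑ y : β, p x y * (-(Real.log (g x S y)))

/-- Gibbs' inequality (non-strict form). -/
lemma gibbs_nonneg {β : Type*} [Fintype β] (w r : β → ℝ) (hw : ∀ y, 0 < w y)
    (hr : ∀ y, 0 < r y) (hrs : ∑ y, r y = 1) :
    0 ≤ ∑ y, w y * (Real.log (w y / ∑ y', w y') - Real.log (r y)) := by
  have hβ : (univ : Finset β).Nonempty := by
    rcases (univ : Finset β).eq_empty_or_nonempty with h | h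
    · rw [h] at hrs; simp at hrs
    · exact h
  have hW : 0 < ∑ y', w y' := Finset.sum_pos (fun y _ => hw y) hβ
  have key : ∀ y, w y - r y * (∑ y', w y') ≤
      w y * (Real.log (w y / ∑ y', w y') - Real.log (r y)) := by
    intro y
    have hpos : 0 < r y * (∑ y', w y') / w y := div_pos (mul_pos (hr y) hW) (hw y)
    have h1 := Real.log_le_sub_one_of_pos hpos
    have e : Real.log (w y / ∑ y', w y') - Real.log (r y) =
        -(Real.log (r y * (∑ y', w y') / w y)) := by
      rw [Real.log_div (hw y).ne' hW.ne', Real.log_div (mul_pos (hr y) hW).ne' (hw y).ne',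
        Real.log_mul (hr y).ne' hW.ne']
      ring
    rw [e]
    have h2 : w y * (r y * (∑ y', w y') / w y - 1) = r y * (∑ y', w y') - w y := by
      field_simp [(hw y).ne']
    nlinarith [mul_le_mul_of_nonneg_left h1 (hw y).le]
  have hsum := Finset.sum_le_sum (fun y (_ : y ∈ univ) => key y)
  have e2 : ∑ y, (w y - r y * (∑ y', w y')) = 0 := by
    rw [Finset.sum_sub_distrib, ← Finset.sum_mul, hrs]; ring
  linarith [e2 ▸ hsum]

/-- Gibbs' inequality (strict form when `r` differs from the normalization of `w`). -/
lemma gibbs_pos {β : Type*} [Fintype β] (w r : β → ℝ) (hw : ∀ y, 0 < w y)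
    (hr : ∀ y, 0 < r y) (hrs : ∑ y, r y = 1) (y₀ : β)
    (hne : r y₀ ≠ w y₀ / ∑ y', w y') :
    0 < ∑ y, w y * (Real.log (w y / ∑ y', w y') - Real.log (r y)) := by
  have hβ : (univ : Finset β).Nonempty := ⟨y₀, mem_univ _⟩
  have hW : 0 < ∑ y', w y' := Finset.sum_pos (fun y _ => hw y) hβ
  have key : ∀ y, w y - r y * (∑ y', w y') ≤
      w y * (Real.log (w y / ∑ y', w y') - Real.log (r y)) := by
    intro y
    have hpos : 0 < r y * (∑ y', w y') / w y := div_pos (mul_pos (hr y) hW) (hw y)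
    have h1 := Real.log_le_sub_one_of_pos hpos
    have e : Real.log (w y / ∑ y', w y') - Real.log (r y) =
        -(Real.log (r y * (∑ y', w y') / w y)) := by
      rw [Real.log_div (hw y).ne' hW.ne', Real.log_div (mul_pos (hr y) hW).ne' (hw y).ne',
        Real.log_mul (hr y).ne' hW.ne']
      ring
    rw [e]
    have h2 : w y * (r y * (∑ y', w y') / w y - 1) = r y * (∑ y', w y') - w y := by
      field_simp [(hw y).ne']
    nlinarith [mul_le_mul_of_nonneg_left h1 (hw y).le]
  have keys : w y₀ - r y₀ * (∑ y', w y') <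
      w y₀ * (Real.log (w y₀ / ∑ y', w y') - Real.log (r y₀)) := by
    have hpos : 0 < r y₀ * (∑ y', w y') / w y₀ := div_pos (mul_pos (hr y₀) hW) (hw y₀)
    have hne1 : r y₀ * (∑ y', w y') / w y₀ ≠ 1 := by
      intro h
      apply hne
      field_simp [(hw y₀).ne'] at h
      rw [eq_div_iff hW.ne']
      linarith
    have h1 := Real.log_lt_sub_one_of_pos hpos hne1
    have e : Real.log (w y₀ / ∑ y', w y') - Real.log (r y₀) =
        -(Real.log (r y₀ * (∑ y', w y') / w y₀)) := by
      rw [Real.log_div (hw y₀).ne' hW.ne', Real.log_div (mul_pos (hr y₀) hW).ne' (hw y₀).ne',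
        Real.log_mul (hr y₀).ne' hW.ne']
      ring
    rw [e]
    have h2 : w y₀ * (r y₀ * (∑ y', w y') / w y₀ - 1) = r y₀ * (∑ y', w y') - w y₀ := by
      field_simp [(hw y₀).ne']
    nlinarith [mul_lt_mul_of_pos_left h1 (hw y₀)]
  have hsum := Finset.sum_lt_sum (fun y (_ : y ∈ univ) => key y) ⟨y₀, mem_univ _, keys⟩
  have e2 : ∑ y, (w y - r y * (∑ y', w y')) = 0 := by
    rw [Finset.sum_sub_distrib, ← Finset.sum_mul, hrs]; ring
  linarith [e2 ▸ hsum]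

/-- The agreement class on a feature subset `S`. -/
noncomputable def classSet {d : ℕ} {α : Fin d → Type*} [∀ i, Fintype (α i)]
    (S : Finset (Fin d)) (x : ∀ i, α i) : Finset (∀ i, α i) :=
  univ.filter (fun x' : ∀ i, α i => ∀ i ∈ S, x' i = x i)

/-- If the random mask is independent of `(X, Y)` and has full support, then any minimizer
of the masked cross-entropy risk computes the Bayes-optimal prediction
`g*(x ⊙ m, m) = p(Y | X_S = x_S)` for every mask. -/
theorem missingness_training_bayes_optimal
    (p : (∀ i, α i) → β → ℝ) (hp_pos : ∀ x y, 0 < p x y)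
    (hp_sum : ∑ x : ∀ i, α i, ∑ y : β, p x y = 1)
    (π : Finset (Fin d) → ℝ) (hπ_pos : ∀ S, 0 < π S)
    (hπ_sum : ∑ S : Finset (Fin d), π S = 1)
    (g : (∀ i, α i) → Finset (Fin d) → β → ℝ)
    (hg_inv : ∀ (x x' : ∀ i, α i) (S : Finset (Fin d)),
      (∀ i ∈ S, x i = x' i) → g x S = g x' S)
    (hg_pos : ∀ x S y, 0 < g x S y) (hg_sum : ∀ x S, ∑ y : β, g x S y = 1)
    (hg_min : ∀ g' : (∀ i, α i) → Finset (Fin d) → β → ℝ,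
      (∀ (x x' : ∀ i, α i) (S : Finset (Fin d)), (∀ i ∈ S, x i = x' i) → g' x S = g' x' S) →
      (∀ x S y, 0 < g' x S y) → (∀ x S, ∑ y : β, g' x S y = 1) →
      maskedRisk p π g ≤ maskedRisk p π g') :
    ∀ (x : ∀ i, α i) (S : Finset (Fin d)) (y : β), g x S y = condProbY p x S y := by
  classical
  have hβne : (univ : Finset β).Nonempty := by
    rcases (univ : Finset β).eq_empty_or_nonempty with h | h
    · rw [h] at hp_sum; simp at hp_sum
    · exact h
  have hmem : ∀ (S : Finset (Fin d)) (x : ∀ i, α i), x ∈ classSet S x := by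
    intro S x; simp [classSet]
  have hclass_congr : ∀ (S : Finset (Fin d)) (x x'' : ∀ i, α i),
      (∀ i ∈ S, x i = x'' i) → classSet S x = classSet S x'' := by
    intro S x x'' hxx
    ext a
    simp only [classSet, mem_filter, mem_univ, true_and]
    constructor
    · intro h i hi; rw [h i hi]; exact hxx i hi
    · intro h i hi; rw [h i hi]; exact (hxx i hi).symm
  have hnum_pos : ∀ (S : Finset (Fin d)) (x : ∀ i, α i) (y : β),
      0 < ∑ x' ∈ classSet S x, p x' y :=
    fun S x y => Finset.sum_pos (fun _ _ => hp_pos _ _) ⟨x, hmem S x⟩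
  have hden_comm : ∀ (S : Finset (Fin d)) (x : ∀ i, α i),
      ∑ x' ∈ classSet S x, ∑ y : β, p x' y = ∑ y : β, ∑ x' ∈ classSet S x, p x' y :=
    fun S x => Finset.sum_comm
  have hden_pos : ∀ (S : Finset (Fin d)) (x : ∀ i, α i),
      0 < ∑ x' ∈ classSet S x, ∑ y : β, p x' y := by
    intro S x
    rw [hden_comm]
    exact Finset.sum_pos (fun y _ => hnum_pos S x y) hβne
  have hcond_eq : ∀ (x : ∀ i, α i) (S : Finset (Fin d)) (y : β),
      condProbY p x S y =
        (∑ x' ∈ classSet S x, p x' y) / (∑ x' ∈ classSet S x, ∑ y' : β, p x' y') :=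
    fun _ _ _ => rfl
  have hcond_pos : ∀ (x : ∀ i, α i) (S : Finset (Fin d)) (y : β),
      0 < condProbY p x S y := by
    intro x S y
    rw [hcond_eq]
    exact div_pos (hnum_pos S x y) (hden_pos S x)
  have hcond_inv : ∀ (x x'' : ∀ i, α i) (S : Finset (Fin d)),
      (∀ i ∈ S, x i = x'' i) → condProbY p x S = condProbY p x'' S := by
    intro x x'' S hxx
    funext y
    rw [hcond_eq, hcond_eq, hclass_congr S x x'' hxx]
  have hcond_sum : ∀ (x : ∀ i, α i) (S : Finset (Fin d)),
      ∑ y : β, condProbY p x S y = 1 := by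
    intro x S
    simp only [hcond_eq]
    rw [← Finset.sum_div, ← hden_comm]
    exact div_self (hden_pos S x).ne'
  have hle := hg_min (condProbY p) hcond_inv hcond_pos hcond_sum
  by_contra hcontra
  push_neg at hcontra
  obtain ⟨xb, Sb, yb, hne⟩ := hcontra
  -- rewrite the sum over an agreement class using a representative
  have fiber_eq : ∀ (S : Finset (Fin d)) (x₀ : ∀ i, α i),
      ∑ x ∈ classSet S x₀, ∑ y : β,
          p x y * (Real.log (condProbY p x S y) - Real.log (g x S y)) =
        ∑ y : β, (∑ x' ∈ classSet S x₀, p x' y) *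
          (Real.log ((∑ x' ∈ classSet S x₀, p x' y) /
            (∑ y' : β, ∑ x' ∈ classSet S x₀, p x' y')) - Real.log (g x₀ S y)) := by
    intro S x₀
    rw [Finset.sum_comm]
    refine Finset.sum_congr rfl fun y _ => ?_
    have step : ∀ x ∈ classSet S x₀,
        p x y * (Real.log (condProbY p x S y) - Real.log (g x S y)) =
        p x y * (Real.log ((∑ x' ∈ classSet S x₀, p x' y) /
            (∑ y' : β, ∑ x' ∈ classSet S x₀, p x' y')) - Real.log (g x₀ S y)) := by
      intro x hx
      have hxS : ∀ i ∈ S, x i = x₀ i := by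
        simpa [classSet] using hx
      rw [hcond_inv x x₀ S hxS, hg_inv x x₀ S hxS, hcond_eq, hden_comm S x₀]
    rw [Finset.sum_congr rfl step, ← Finset.sum_mul]
  have gibbs_cls_nonneg : ∀ (S : Finset (Fin d)) (x₀ : ∀ i, α i),
      0 ≤ ∑ x ∈ classSet S x₀, ∑ y : β,
        p x y * (Real.log (condProbY p x S y) - Real.log (g x S y)) := by
    intro S x₀
    rw [fiber_eq S x₀]
    exact gibbs_nonneg (fun y => ∑ x' ∈ classSet S x₀, p x' y) (g x₀ S)
      (fun y => hnum_pos S x₀ y) (fun y => hg_pos x₀ S y) (hg_sum x₀ S)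
  have gibbs_cls_pos :
      0 < ∑ x ∈ classSet Sb xb, ∑ y : β,
        p x y * (Real.log (condProbY p x Sb y) - Real.log (g x Sb y)) := by
    rw [fiber_eq Sb xb]
    refine gibbs_pos (fun y => ∑ x' ∈ classSet Sb xb, p x' y) (g xb Sb)
      (fun y => hnum_pos Sb xb y) (fun y => hg_pos xb Sb y) (hg_sum xb Sb) yb ?_
    have e : condProbY p xb Sb yb = (∑ x' ∈ classSet Sb xb, p x' yb) /
        (∑ y' : β, ∑ x' ∈ classSet Sb xb, p x' y') := by
      rw [hcond_eq, hden_comm]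
    rw [← e]
    exact hne
  -- decompose the full sum into agreement classes
  have decomp : ∀ S : Finset (Fin d),
      ∑ x : ∀ i, α i, ∑ y : β,
          p x y * (Real.log (condProbY p x S y) - Real.log (g x S y)) =
      ∑ z : (∀ i : {i // i ∈ S}, α i.1),
        ∑ x ∈ univ.filter (fun x : ∀ i, α i => (fun i : {i // i ∈ S} => x i.1) = z),
          ∑ y : β, p x y * (Real.log (condProbY p x S y) - Real.log (g x S y)) :=
    fun S => (Finset.sum_fiberwise _ _ _).symm
  have fiber_as_class : ∀ (S : Finset (Fin d)) (x₀ : ∀ i, α i),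
      univ.filter (fun x : ∀ i, α i =>
          (fun i : {i // i ∈ S} => x i.1) = (fun i : {i // i ∈ S} => x₀ i.1)) =
        classSet S x₀ := by
    intro S x₀
    ext a
    simp only [classSet, mem_filter, mem_univ, true_and]
    constructor
    · intro h i hi; exact congrFun h ⟨i, hi⟩
    · intro h; funext i; exact h i.1 i.2
  have Δ_nonneg : ∀ S : Finset (Fin d),
      0 ≤ ∑ x : ∀ i, α i, ∑ y : β,
        p x y * (Real.log (condProbY p x S y) - Real.log (g x S y)) := by
    intro S
    rw [decomp S]
    refine Finset.sum_nonneg fun z _ => ?_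
    rcases (univ.filter (fun x : ∀ i, α i =>
        (fun i : {i // i ∈ S} => x i.1) = z)).eq_empty_or_nonempty with h | ⟨x₀, hx₀⟩
    · rw [h]; simp
    · have hz : (fun i : {i // i ∈ S} => x₀ i.1) = z := (mem_filter.mp hx₀).2
      rw [← hz, fiber_as_class S x₀]
      exact gibbs_cls_nonneg S x₀
  have Δb_pos :
      0 < ∑ x : ∀ i, α i, ∑ y : β,
        p x y * (Real.log (condProbY p x Sb y) - Real.log (g x Sb y)) := by
    rw [decomp Sb]
    refine Finset.sum_pos' (fun z _ => ?_) ⟨(fun i : {i // i ∈ Sb} => xb i.1), mem_univ _, ?_⟩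
    · rcases (univ.filter (fun x : ∀ i, α i =>
          (fun i : {i // i ∈ Sb} => x i.1) = z)).eq_empty_or_nonempty with h | ⟨x₀, hx₀⟩
      · rw [h]; simp
      · have hz : (fun i : {i // i ∈ Sb} => x₀ i.1) = z := (mem_filter.mp hx₀).2
        rw [← hz, fiber_as_class Sb x₀]
        exact gibbs_cls_nonneg Sb x₀
    · rw [fiber_as_class Sb xb]
      exact gibbs_cls_pos
  have hdiff : maskedRisk p π g - maskedRisk p π (condProbY p) =
      ∑ S : Finset (Fin d), π S * ∑ x : ∀ i, α i, ∑ y : β,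
        p x y * (Real.log (condProbY p x S y) - Real.log (g x S y)) := by
    simp only [maskedRisk]
    rw [← Finset.sum_sub_distrib]
    refine Finset.sum_congr rfl fun S _ => ?_
    rw [← mul_sub]
    congr 1
    rw [← Finset.sum_sub_distrib]
    refine Finset.sum_congr rfl fun x _ => ?_
    rw [← Finset.sum_sub_distrib]
    refine Finset.sum_congr rfl fun y _ => ?_
    ring
  have hpos : 0 < maskedRisk p π g - maskedRisk p π (condProbY p) := by
    rw [hdiff]
    exact Finset.sum_pos' (fun S _ => mul_nonneg (hπ_pos S).le (Δ_nonneg S))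
      ⟨Sb, mem_univ _, mul_pos (hπ_pos Sb) Δb_pos⟩
  linarith
end

section
/- If a random mask M is independent of X with full support, then the minimizer of the surrogate objective E_{M,X}[(g(X ⊙ M, M) − f(X))²] satisfies g*(x ⊙ m, m) = E[f(X) | X_S = x_S] for every m, with S = {i : m_i = 1}; i.e., the optimal surrogate marginalizes removed features with their conditional distribution. -/
open Finset
open scoped Classical

variable {d : ℕ} {α : Fin d → Type*} [∀ i, Fintype (α i)]

/-- Expected squared surrogate risk with random feature masking: the mask `S`
(equivalently `m ∈ {0,1}^d`) is sampled from `π`, independently of `X`. -/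
noncomputable def surrogateRisk (q f : (∀ i, α i) → ℝ) (π : Finset (Fin d) → ℝ)
    (g : (∀ i, α i) → Finset (Fin d) → ℝ) : ℝ :=
  ∑ S : Finset (Fin d), π S * ∑ x : ∀ i, α i, q x * (g x S - f x) ^ 2

set_option linter.unusedVariables false

lemma classEq (x x' : ∀ i, α i) (S : Finset (Fin d)) (h : ∀ i ∈ S, x i = x' i) :
    univ.filter (fun z : ∀ i, α i => ∀ i ∈ S, z i = x i)
      = univ.filter (fun z : ∀ i, α i => ∀ i ∈ S, z i = x' i) := by
  apply filter_congr
  intro z _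
  constructor
  · intro hz i hi; rw [hz i hi, h i hi]
  · intro hz i hi; rw [hz i hi, h i hi]

lemma cond_inv (q f : (∀ i, α i) → ℝ) (x x' : ∀ i, α i) (S : Finset (Fin d))
    (h : ∀ i ∈ S, x i = x' i) :
    condExpSubset q f x S = condExpSubset q f x' S := by
  unfold condExpSubset
  rw [classEq x x' S h]

lemma cross_zero (q : (∀ i, α i) → ℝ) (hq_pos : ∀ x, 0 < q x) (f : (∀ i, α i) → ℝ)
    (x : ∀ i, α i) (S : Finset (Fin d)) :
    ∑ z ∈ univ.filter (fun z : ∀ i, α i => ∀ i ∈ S, z i = x i),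
      q z * (condExpSubset q f x S - f z) = 0 := by
  set A := univ.filter (fun z : ∀ i, α i => ∀ i ∈ S, z i = x i) with hA
  have hxA : x ∈ A := by simp [hA]
  have hW : 0 < ∑ z ∈ A, q z :=
    Finset.sum_pos' (fun z _ => (hq_pos z).le) ⟨x, hxA, hq_pos x⟩
  have h1 : ∑ z ∈ A, q z * (condExpSubset q f x S - f z)
      = (∑ z ∈ A, q z) * condExpSubset q f x S - ∑ z ∈ A, q z * f z := by
    simp only [mul_sub]
    rw [Finset.sum_sub_distrib, Finset.sum_mul]
  rw [h1, condExpSubset, ← hA, mul_div_cancel₀ _ hW.ne']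
  ring

lemma cross_total (q : (∀ i, α i) → ℝ) (hq_pos : ∀ x, 0 < q x) (f : (∀ i, α i) → ℝ)
    (h : (∀ i, α i) → Finset (Fin d) → ℝ)
    (hh_inv : ∀ (x x' : ∀ i, α i) (S : Finset (Fin d)),
      (∀ i ∈ S, x i = x' i) → h x S = h x' S)
    (S : Finset (Fin d)) :
    ∑ x : ∀ i, α i, q x * (h x S * (condExpSubset q f x S - f x)) = 0 := by
  set F := fun x : ∀ i, α i => q x * (h x S * (condExpSubset q f x S - f x)) with hF
  have hfib := Finset.sum_fiberwise_of_maps_to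
    (g := fun x : ∀ i, α i => (fun i : S => x i))
    (s := (univ : Finset (∀ i, α i))) (t := (univ : Finset (∀ i : S, α i)))
    (fun x _ => mem_univ _) F
  rw [← hfib]
  apply Finset.sum_eq_zero
  intro y _
  by_cases hne : (univ.filter (fun x : ∀ i, α i => (fun i : S => x i) = y)).Nonempty
  · obtain ⟨x0, hx0⟩ := hne
    have hx0' : (fun i : S => x0 i) = y := (mem_filter.1 hx0).2
    have hfibeq : univ.filter (fun x : ∀ i, α i => (fun i : S => x i) = y)
        = univ.filter (fun z : ∀ i, α i => ∀ i ∈ S, z i = x0 i) := by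
      apply filter_congr
      intro z _
      subst hx0'
      constructor
      · intro hz i hi; exact congrFun hz ⟨i, hi⟩
      · intro hz; funext i; exact hz i i.2
    rw [hfibeq]
    have hconst : ∀ z ∈ univ.filter (fun z : ∀ i, α i => ∀ i ∈ S, z i = x0 i),
        F z = h x0 S * (q z * (condExpSubset q f x0 S - f z)) := by
      intro z hz
      have hzx : ∀ i ∈ S, x0 i = z i := fun i hi => ((mem_filter.1 hz).2 i hi).symm
      rw [hF]
      simp only
      rw [← hh_inv x0 z S hzx, ← cond_inv q f x0 z S hzx]
      ring
    rw [Finset.sum_congr rfl hconst, ← Finset.mul_sum, cross_zero q hq_pos f x0 S, mul_zero]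
  · rw [Finset.not_nonempty_iff_eq_empty.1 hne, Finset.sum_empty]

lemma risk_decomp (q : (∀ i, α i) → ℝ) (hq_pos : ∀ x, 0 < q x) (f : (∀ i, α i) → ℝ)
    (g : (∀ i, α i) → Finset (Fin d) → ℝ)
    (hg_inv : ∀ (x x' : ∀ i, α i) (S : Finset (Fin d)),
      (∀ i ∈ S, x i = x' i) → g x S = g x' S)
    (S : Finset (Fin d)) :
    ∑ x : ∀ i, α i, q x * (g x S - f x) ^ 2
      = ∑ x : ∀ i, α i, q x * (condExpSubset q f x S - f x) ^ 2
        + ∑ x : ∀ i, α i, q x * (g x S - condExpSubset q f x S) ^ 2 := by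
  have hh_inv : ∀ (x x' : ∀ i, α i) (T : Finset (Fin d)),
      (∀ i ∈ T, x i = x' i) → (g x T - condExpSubset q f x T) = (g x' T - condExpSubset q f x' T) :=
    fun x x' T hxx' => by rw [hg_inv x x' T hxx', cond_inv q f x x' T hxx']
  have key := cross_total q hq_pos f (fun x T => g x T - condExpSubset q f x T) hh_inv S
  have expand : ∀ x : ∀ i, α i,
      q x * (g x S - f x) ^ 2
        = (q x * (condExpSubset q f x S - f x) ^ 2 + q x * (g x S - condExpSubset q f x S) ^ 2)
          + 2 * (q x * ((g x S - condExpSubset q f x S) * (condExpSubset q f x S - f x))) :=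
    fun x => by ring
  rw [Finset.sum_congr rfl (fun x _ => expand x), Finset.sum_add_distrib,
    Finset.sum_add_distrib, ← Finset.mul_sum, key]
  ring

/-- If the random mask is independent of `X` with full support, then any minimizer of the
surrogate objective `E[(g(X ⊙ M, M) - f(X))²]` marginalizes removed features with their
conditional distribution: `g*(x ⊙ m, m) = E[f(X) | X_S = x_S]` for every mask. -/
theorem surrogate_training_conditional_expectation
    (q : (∀ i, α i) → ℝ) (hq_pos : ∀ x, 0 < q x) (hq_sum : ∑ x : ∀ i, α i, q x = 1)
    (f : (∀ i, α i) → ℝ)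
    (π : Finset (Fin d) → ℝ) (hπ_pos : ∀ S, 0 < π S)
    (hπ_sum : ∑ S : Finset (Fin d), π S = 1)
    (g : (∀ i, α i) → Finset (Fin d) → ℝ)
    (hg_inv : ∀ (x x' : ∀ i, α i) (S : Finset (Fin d)),
      (∀ i ∈ S, x i = x' i) → g x S = g x' S)
    (hg_min : ∀ g' : (∀ i, α i) → Finset (Fin d) → ℝ,
      (∀ (x x' : ∀ i, α i) (S : Finset (Fin d)), (∀ i ∈ S, x i = x' i) → g' x S = g' x' S) →
      surrogateRisk q f π g ≤ surrogateRisk q f π g') :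
    ∀ (x : ∀ i, α i) (S : Finset (Fin d)), g x S = condExpSubset q f x S := by
  set c : (∀ i, α i) → Finset (Fin d) → ℝ := fun x S => condExpSubset q f x S with hc
  have hc_inv : ∀ (x x' : ∀ i, α i) (S : Finset (Fin d)),
      (∀ i ∈ S, x i = x' i) → c x S = c x' S :=
    fun x x' S h => cond_inv q f x x' S h
  have hle := hg_min c hc_inv
  have hdecomp : surrogateRisk q f π g
      = surrogateRisk q f π c
        + ∑ S : Finset (Fin d), π S * ∑ x : ∀ i, α i, q x * (g x S - c x S) ^ 2 := by
    unfold surrogateRisk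
    rw [← Finset.sum_add_distrib]
    refine Finset.sum_congr rfl fun S _ => ?_
    rw [risk_decomp q hq_pos f g hg_inv S, mul_add]
  have hΔnn : ∀ S ∈ (univ : Finset (Finset (Fin d))),
      0 ≤ π S * ∑ x : ∀ i, α i, q x * (g x S - c x S) ^ 2 :=
    fun S _ => mul_nonneg (hπ_pos S).le
      (Finset.sum_nonneg fun x _ => mul_nonneg (hq_pos x).le (sq_nonneg _))
  have hΔ0 : ∑ S : Finset (Fin d), π S * ∑ x : ∀ i, α i, q x * (g x S - c x S) ^ 2 = 0 := by
    have h1 : ∑ S : Finset (Fin d), π S * ∑ x : ∀ i, α i, q x * (g x S - c x S) ^ 2 ≤ 0 := by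
      linarith
    exact le_antisymm h1 (Finset.sum_nonneg hΔnn)
  intro x S
  have hS0 := (Finset.sum_eq_zero_iff_of_nonneg hΔnn).1 hΔ0 S (mem_univ S)
  have hinner : ∑ x : ∀ i, α i, q x * (g x S - c x S) ^ 2 = 0 := by
    rcases mul_eq_zero.1 hS0 with h | h
    · exact absurd h (hπ_pos S).ne'
    · exact h
  have hx0 := (Finset.sum_eq_zero_iff_of_nonneg
    (fun x _ => mul_nonneg (hq_pos x).le (sq_nonneg (g x S - c x S)))).1 hinner x (mem_univ x)
  have h2 : (g x S - c x S) ^ 2 = 0 := by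
    rcases mul_eq_zero.1 hx0 with h | h
    · exact absurd h (hq_pos x).ne'
    · exact h
  have := pow_eq_zero_iff (n := 2) (by norm_num) |>.1 h2
  linarith [this]
end
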